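/- arXiv:1001.0755 — 6 statements merged into one kernel-verified Lean document; each statement's English description precedes it below -/
import Mathlib

section
/- For any interval K and weight w, if h_K is the Haar function on K and h^w_I is the weighted Haar function for an interval I ⊇ K, then |⟨h_K, h^w_I⟩_w| ≤ (average of w over K)^{1/2}, where ⟨f,g⟩_w = ∫ f g w dx. -/
open MeasureTheory Set

/-- A dyadic interval `[k·2⁻ⁿ, (k+1)·2⁻ⁿ)`. -/
structure DyadicI where
  n : ℤ
  k : ℤ

namespace DyadicI

noncomputable def len (I : DyadicI) : ℝ := (2:ℝ) ^ (-I.n)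

noncomputable def left (I : DyadicI) : ℝ := I.k * I.len

noncomputable def set (I : DyadicI) : Set ℝ := Set.Ico I.left (I.left + I.len)

/-- left half -/
def minus (I : DyadicI) : DyadicI := ⟨I.n + 1, 2 * I.k⟩

/-- right half -/
def plus (I : DyadicI) : DyadicI := ⟨I.n + 1, 2 * I.k + 1⟩

/-- dyadic parent -/
def parent (I : DyadicI) : DyadicI := ⟨I.n - 1, Int.fdiv I.k 2⟩

/-- `w(I) = ∫_I w` -/
noncomputable def intg (w : ℝ → ℝ) (I : DyadicI) : ℝ := ∫ x in I.set, w x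

/-- `⟨w⟩_I = |I|⁻¹ ∫_I w` -/
noncomputable def avg (w : ℝ → ℝ) (I : DyadicI) : ℝ := (∫ x in I.set, w x) / I.len

/-- Haar function `h_I = |I|^{-1/2}(χ_{I₊} - χ_{I₋})` -/
noncomputable def haar (I : DyadicI) : ℝ → ℝ := fun x =>
  (1 / Real.sqrt I.len) *
    (I.plus.set.indicator (fun _ => (1:ℝ)) x - I.minus.set.indicator (fun _ => (1:ℝ)) x)

/-- weighted Haar function `h^w_I` -/
noncomputable def whaar (w : ℝ → ℝ) (I : DyadicI) : ℝ → ℝ := fun x =>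
  (1 / Real.sqrt (intg w I)) *
    (Real.sqrt (intg w I.minus / intg w I.plus) * I.plus.set.indicator (fun _ => (1:ℝ)) x
      - Real.sqrt (intg w I.plus / intg w I.minus) * I.minus.set.indicator (fun _ => (1:ℝ)) x)

/-- `Δ_I w = (⟨w⟩_{I₊} − ⟨w⟩_{I₋})/2` -/
noncomputable def del (w : ℝ → ℝ) (I : DyadicI) : ℝ := (avg w I.plus - avg w I.minus) / 2

end DyadicI

/-- weighted inner product `⟨f,g⟩_w = ∫ f g w` -/
noncomputable def wip (w f g : ℝ → ℝ) : ℝ := ∫ x, f x * g x * w x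

/-- a weight: locally integrable and positive a.e. -/
def IsWeight (w : ℝ → ℝ) : Prop :=
  MeasureTheory.LocallyIntegrable w ∧ ∀ᵐ x ∂(volume : Measure ℝ), 0 < w x

noncomputable def winv (w : ℝ → ℝ) : ℝ → ℝ := fun x => (w x)⁻¹

/-- membership in dyadic A₂ -/
def MemA2d (w : ℝ → ℝ) : Prop :=
  BddAbove (Set.range fun I : DyadicI => DyadicI.avg w I * DyadicI.avg (winv w) I)

/-- the dyadic A₂ characteristic `[w]_{A₂^d}` -/
noncomputable def A2d (w : ℝ → ℝ) : ℝ :=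
  ⨆ I : DyadicI, DyadicI.avg w I * DyadicI.avg (winv w) I

/-- the dyadic BMO norm -/
noncomputable def bmoD (b : ℝ → ℝ) : ℝ :=
  ⨆ I : DyadicI, (∫ x in I.set, |b x - DyadicI.avg b I|) / I.len

/-- membership in dyadic BMO -/
def MemBMOd (b : ℝ → ℝ) : Prop :=
  BddAbove (Set.range fun I : DyadicI => (∫ x in I.set, |b x - DyadicI.avg b I|) / I.len)


/-!
`h_K` has `L²(w)`-norm `⟨w⟩_K^{1/2}` and `h^w_I` has `L²(w)`-norm `1`, since both are
combinations of the indicators of two disjoint halves; the bound is Cauchy–Schwarz in `L²(w)`.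
-/

section Integral

variable {α : Type*} [MeasurableSpace α] {μ : Measure α}

theorem setIntegral_pos_of_ae_pos {f : α → ℝ} {s : Set α} (hf : ∀ᵐ x ∂μ, 0 < f x)
    (hfs : IntegrableOn f s μ) (hs : μ s ≠ 0) : 0 < ∫ x in s, f x ∂μ := by
  have hf' : ∀ᵐ x ∂μ.restrict s, 0 < f x := ae_restrict_of_ae hf
  rw [integral_pos_iff_support_of_nonneg_ae (hf'.mono fun x hx => hx.le) hfs,
    measure_congr ((ae_eq_univ (s := Function.support f)).mpr (hf'.mono fun x hx => hx.ne')),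
    Measure.restrict_apply_univ]
  exact pos_iff_ne_zero.mpr hs

theorem abs_integral_mul_le_sqrt_mul_sqrt {F G : α → ℝ} (hF : MemLp F 2 μ)
    (hG : MemLp G 2 μ) :
    |∫ x, F x * G x ∂μ| ≤ √(∫ x, F x ^ 2 ∂μ) * √(∫ x, G x ^ 2 ∂μ) := by
  have hF' : MemLp F (ENNReal.ofReal 2) μ := by simpa using hF
  have hG' : MemLp G (ENNReal.ofReal 2) μ := by simpa using hG
  have holder := integral_mul_norm_le_Lp_mul_Lq Real.HolderConjugate.two_two hF' hG'
  simp only [Real.norm_eq_abs, Real.rpow_two, sq_abs, ← Real.sqrt_eq_rpow] at holder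
  calc |∫ x, F x * G x ∂μ| ≤ ∫ x, |F x * G x| ∂μ := abs_integral_le_integral_abs
    _ = ∫ x, |F x| * |G x| ∂μ := by simp only [abs_mul]
    _ ≤ _ := holder

theorem abs_integral_mul_mul_le_sqrt_mul_sqrt {f g w : α → ℝ} (hw : 0 ≤ᵐ[μ] w)
    (hwm : AEStronglyMeasurable w μ) (hfm : AEStronglyMeasurable f μ)
    (hgm : AEStronglyMeasurable g μ) (hf : Integrable (fun x => f x ^ 2 * w x) μ)
    (hg : Integrable (fun x => g x ^ 2 * w x) μ) :
    |∫ x, f x * g x * w x ∂μ|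
      ≤ √(∫ x, f x ^ 2 * w x ∂μ) * √(∫ x, g x ^ 2 * w x ∂μ) := by
  have hsq : ∀ᵐ x ∂μ, ∀ h : α → ℝ, (h x * √(w x)) ^ 2 = h x ^ 2 * w x :=
    hw.mono fun x hx h => by rw [mul_pow, Real.sq_sqrt hx]
  have hmemLp : ∀ h : α → ℝ, AEStronglyMeasurable h μ →
      Integrable (fun x => h x ^ 2 * w x) μ → MemLp (fun x => h x * √(w x)) 2 μ :=
    fun h hm hi =>
    (memLp_two_iff_integrable_sq (hm.mul (Real.continuous_sqrt.comp_aestronglyMeasurable hwm))).2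
      (hi.congr (hsq.mono fun x hx => (hx h).symm))
  calc |∫ x, f x * g x * w x ∂μ| = |∫ x, f x * √(w x) * (g x * √(w x)) ∂μ| := by
        refine congrArg _ (integral_congr_ae (hw.mono fun x hx => ?_))
        dsimp only
        rw [mul_mul_mul_comm, Real.mul_self_sqrt hx]
    _ ≤ √(∫ x, (f x * √(w x)) ^ 2 ∂μ) * √(∫ x, (g x * √(w x)) ^ 2 ∂μ) :=
        abs_integral_mul_le_sqrt_mul_sqrt (hmemLp f hfm hf) (hmemLp g hgm hg)
    _ = _ := by
        rw [integral_congr_ae (hsq.mono fun x hx => hx f),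
          integral_congr_ae (hsq.mono fun x hx => hx g)]

end Integral

section TwoStep

variable {α : Type*} {S T : Set α}

noncomputable def twoStep (c p m : ℝ) (S T : Set α) : α → ℝ := fun x =>
  c * (p * S.indicator 1 x - m * T.indicator 1 x)

theorem twoStep_sq_mul (c p m : ℝ) (hST : Disjoint S T) (w : α → ℝ) (x : α) :
    twoStep c p m S T x ^ 2 * w x
      = c ^ 2 * (p ^ 2 * S.indicator w x + m ^ 2 * T.indicator w x) := by
  by_cases hS : x ∈ S
  · simp [twoStep, hS, hST.notMem_of_mem_left hS]
    ring
  · by_cases hT : x ∈ T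
    · simp [twoStep, hS, hT]
      ring
    · simp [twoStep, hS, hT]

variable [MeasurableSpace α] {μ : Measure α}

theorem measurable_twoStep (c p m : ℝ) (hS : MeasurableSet S) (hT : MeasurableSet T) :
    Measurable (twoStep c p m S T) :=
  measurable_const.mul (((measurable_one.indicator hS).const_mul p).sub
    ((measurable_one.indicator hT).const_mul m))

theorem integrable_twoStep_sq_mul (c p m : ℝ) (hST : Disjoint S T) (hS : MeasurableSet S)
    (hT : MeasurableSet T) {w : α → ℝ} (hwS : IntegrableOn w S μ)
    (hwT : IntegrableOn w T μ) :
    Integrable (fun x => twoStep c p m S T x ^ 2 * w x) μ := by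
  simp_rw [twoStep_sq_mul c p m hST w]
  exact (((hwS.integrable_indicator hS).const_mul _).add
    ((hwT.integrable_indicator hT).const_mul _)).const_mul _

theorem integral_twoStep_sq_mul (c p m : ℝ) (hST : Disjoint S T) (hS : MeasurableSet S)
    (hT : MeasurableSet T) {w : α → ℝ} (hwS : IntegrableOn w S μ)
    (hwT : IntegrableOn w T μ) :
    ∫ x, twoStep c p m S T x ^ 2 * w x ∂μ
      = c ^ 2 * (p ^ 2 * ∫ x in S, w x ∂μ + m ^ 2 * ∫ x in T, w x ∂μ) := by
  simp_rw [twoStep_sq_mul c p m hST w]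
  rw [integral_const_mul, integral_add ((hwS.integrable_indicator hS).const_mul _)
      ((hwT.integrable_indicator hT).const_mul _),
    integral_const_mul, integral_const_mul, integral_indicator hS, integral_indicator hT]

end TwoStep

namespace DyadicI

theorem len_pos (J : DyadicI) : 0 < J.len := zpow_pos two_pos _

theorem len_minus (J : DyadicI) : J.minus.len = J.len / 2 := by
  change (2 : ℝ) ^ (-(J.n + 1)) = 2 ^ (-J.n) / 2
  rw [neg_add, zpow_add₀ two_ne_zero, zpow_neg_one, div_eq_mul_inv]

theorem len_plus (J : DyadicI) : J.plus.len = J.len / 2 := J.len_minus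

theorem set_minus (J : DyadicI) : J.minus.set = Ico J.left (J.left + J.len / 2) := by
  simp only [set, left, len_minus]
  simp only [minus]
  push_cast
  ring_nf

theorem set_plus (J : DyadicI) :
    J.plus.set = Ico (J.left + J.len / 2) (J.left + J.len) := by
  simp only [set, left, len_plus]
  simp only [plus]
  push_cast
  ring_nf

theorem disjoint_minus_plus (J : DyadicI) : Disjoint J.minus.set J.plus.set := by
  rw [set_minus, set_plus]
  exact Ico_disjoint_Ico_same

theorem set_minus_union_set_plus (J : DyadicI) : J.minus.set ∪ J.plus.set = J.set := by
  rw [set_minus, set_plus]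
  exact Ico_union_Ico_eq_Ico (by linarith [J.len_pos]) (by linarith [J.len_pos])

theorem measurableSet_set (J : DyadicI) : MeasurableSet J.set := measurableSet_Ico

theorem volume_set (J : DyadicI) : volume J.set = ENNReal.ofReal J.len := by
  simp [set, Real.volume_Ico]

end DyadicI

namespace IsWeight

open DyadicI

variable {w : ℝ → ℝ}

theorem integrableOn_set (hw : IsWeight w) (J : DyadicI) : IntegrableOn w J.set :=
  (hw.1.integrableOn_isCompact isCompact_Icc).mono_set Ico_subset_Icc_self

theorem intg_pos (hw : IsWeight w) (J : DyadicI) : 0 < intg w J :=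
  setIntegral_pos_of_ae_pos hw.2 (hw.integrableOn_set J)
    (by rw [J.volume_set]; exact (ENNReal.ofReal_pos.2 J.len_pos).ne')

theorem intg_eq_add (hw : IsWeight w) (J : DyadicI) :
    intg w J = intg w J.minus + intg w J.plus := by
  rw [intg, ← J.set_minus_union_set_plus, setIntegral_union J.disjoint_minus_plus
    J.plus.measurableSet_set (hw.integrableOn_set _) (hw.integrableOn_set _)]
  rfl

end IsWeight

namespace DyadicI

variable {w : ℝ → ℝ}

theorem haar_eq_twoStep (K : DyadicI) :
    K.haar = twoStep (1 / √K.len) 1 1 K.plus.set K.minus.set := by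
  funext x
  simp only [haar, twoStep, one_mul, Pi.one_def]

theorem whaar_eq_twoStep (w : ℝ → ℝ) (I : DyadicI) :
    whaar w I = twoStep (1 / √(intg w I)) √(intg w I.minus / intg w I.plus)
      √(intg w I.plus / intg w I.minus) I.plus.set I.minus.set := rfl

theorem integrable_haar_sq_mul (hw : IsWeight w) (K : DyadicI) :
    Integrable (fun x => K.haar x ^ 2 * w x) := by
  rw [haar_eq_twoStep]
  exact integrable_twoStep_sq_mul _ _ _ K.disjoint_minus_plus.symm K.plus.measurableSet_set
    K.minus.measurableSet_set (hw.integrableOn_set _) (hw.integrableOn_set _)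

theorem integrable_whaar_sq_mul (hw : IsWeight w) (I : DyadicI) :
    Integrable (fun x => whaar w I x ^ 2 * w x) := by
  rw [whaar_eq_twoStep]
  exact integrable_twoStep_sq_mul _ _ _ I.disjoint_minus_plus.symm I.plus.measurableSet_set
    I.minus.measurableSet_set (hw.integrableOn_set _) (hw.integrableOn_set _)

theorem integral_haar_sq_mul (hw : IsWeight w) (K : DyadicI) :
    ∫ x, K.haar x ^ 2 * w x = avg w K := by
  rw [haar_eq_twoStep, integral_twoStep_sq_mul _ _ _ K.disjoint_minus_plus.symm
    K.plus.measurableSet_set K.minus.measurableSet_set (hw.integrableOn_set _)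
    (hw.integrableOn_set _), avg]
  simp only [← intg.eq_1]
  rw [hw.intg_eq_add K, div_pow, one_pow, Real.sq_sqrt K.len_pos.le]
  ring

theorem integral_whaar_sq_mul (hw : IsWeight w) (I : DyadicI) :
    ∫ x, whaar w I x ^ 2 * w x = 1 := by
  have hplus := hw.intg_pos I.plus
  have hminus := hw.intg_pos I.minus
  rw [whaar_eq_twoStep, integral_twoStep_sq_mul _ _ _ I.disjoint_minus_plus.symm
    I.plus.measurableSet_set I.minus.measurableSet_set (hw.integrableOn_set _)
    (hw.integrableOn_set _), hw.intg_eq_add I, div_pow, one_pow,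
    Real.sq_sqrt (hminus.le.trans (le_add_of_nonneg_right hplus.le)),
    Real.sq_sqrt (div_nonneg hminus.le hplus.le), Real.sq_sqrt (div_nonneg hplus.le hminus.le)]
  simp only [intg] at hplus hminus ⊢
  field_simp

theorem measurable_haar (K : DyadicI) : Measurable K.haar := by
  rw [haar_eq_twoStep]
  exact measurable_twoStep _ _ _ K.plus.measurableSet_set K.minus.measurableSet_set

theorem measurable_whaar (w : ℝ → ℝ) (I : DyadicI) : Measurable (whaar w I) :=
  measurable_twoStep _ _ _ I.plus.measurableSet_set I.minus.measurableSet_set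

end DyadicI

theorem stmt0_general (w : ℝ → ℝ) (hw : IsWeight w) (K I : DyadicI) :
    |wip w (DyadicI.haar K) (DyadicI.whaar w I)| ≤ Real.sqrt (DyadicI.avg w K) :=
  calc |wip w K.haar (I.whaar w)|
      ≤ √(∫ x, K.haar x ^ 2 * w x) * √(∫ x, I.whaar w x ^ 2 * w x) :=
        abs_integral_mul_mul_le_sqrt_mul_sqrt (hw.2.mono fun _ hx => hx.le)
          hw.1.aestronglyMeasurable K.measurable_haar.aestronglyMeasurable
          (I.measurable_whaar w).aestronglyMeasurable (K.integrable_haar_sq_mul hw)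
          (I.integrable_whaar_sq_mul hw)
    _ = √(K.avg w) := by
        rw [K.integral_haar_sq_mul hw, I.integral_whaar_sq_mul hw, Real.sqrt_one, mul_one]

/-- `|⟨h_K, h^w_I⟩_w| ≤ ⟨w⟩_K^{1/2}` for `K ⊆ I`. -/
theorem stmt0 (w : ℝ → ℝ) (hw : IsWeight w) (K I : DyadicI) (hKI : K.set ⊆ I.set) :
    |wip w (DyadicI.haar K) (DyadicI.whaar w I)| ≤ Real.sqrt (DyadicI.avg w K) :=
  stmt0_general w hw K I
end

section
/- Let w be an A₂^d weight and J a dyadic interval with dyadic parent Ĵ. Then |⟨h_Ĵ, h^{w^{-1}}_Ĵ⟩_{w^{-1}} · ⟨h_J, h^w_J⟩_w| ≤ √2 [w]_{A₂^d}^{1/2}. -/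
open MeasureTheory Set

/-!
On each half of `I` the product `h_I · h^v_I` is constant, so `⟨h_I, h^v_I⟩_v` is an explicit
expression in `v(I₋)` and `v(I₊)`; by AM–GM it is at most `√⟨v⟩_I`. Applying this to `w⁻¹` on `Ĵ`
and to `w` on `J`, and using `⟨w⟩_J ≤ 2⟨w⟩_Ĵ` (as `J ⊆ Ĵ` and `|Ĵ| = 2|J|`), the product is at most
`√(2 ⟨w⟩_Ĵ ⟨w⁻¹⟩_Ĵ) ≤ √2 [w]_{A₂^d}^{1/2}`.
-/

lemma Real.sqrt_div_mul_eq_sqrt_mul_sqrt {a b : ℝ} (hb : 0 ≤ b) : √(a / b) * b = √a * √b := by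
  rw [Real.sqrt_div' a hb, div_mul_eq_mul_div, mul_div_assoc, Real.div_sqrt]

lemma Real.div_sqrt_mul_sqrt_eq_sqrt_div (s : ℝ) {L : ℝ} (hL : 0 ≤ L) :
    s / (√L * √s) = √(s / L) := by
  rw [mul_comm, ← div_div, Real.div_sqrt, Real.sqrt_div' s hL]

namespace DyadicI

lemma len_pos_s1 (I : DyadicI) : 0 < I.len := zpow_pos two_pos _

lemma len_minus_s1 (I : DyadicI) : I.minus.len = I.len / 2 := by
  simp only [len, minus, neg_add, zpow_add₀ (two_ne_zero' ℝ), zpow_neg_one, div_eq_mul_inv]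

lemma len_plus_s1 (I : DyadicI) : I.plus.len = I.len / 2 := I.len_minus_s1

lemma set_minus_s1 (I : DyadicI) : I.minus.set = Ico I.left (I.left + I.len / 2) := by
  rw [set, left, left, len_minus_s1, show (I.minus.k : ℝ) = 2 * I.k by simp [minus]]
  congr 1 <;> ring

lemma set_plus_s1 (I : DyadicI) : I.plus.set = Ico (I.left + I.len / 2) (I.left + I.len) := by
  rw [set, left, left, len_plus_s1, show (I.plus.k : ℝ) = 2 * I.k + 1 by simp [plus]]
  congr 1 <;> ring

lemma measurableSet_set_s1 (I : DyadicI) : MeasurableSet I.set := measurableSet_Ico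

lemma set_minus_union_set_plus_s1 (I : DyadicI) : I.minus.set ∪ I.plus.set = I.set := by
  rw [set_minus_s1, set_plus_s1, set]
  have := I.len_pos_s1
  exact Ico_union_Ico_eq_Ico (by linarith) (by linarith)

lemma disjoint_set_minus_set_plus (I : DyadicI) : Disjoint I.minus.set I.plus.set := by
  rw [set_minus_s1, set_plus_s1]
  exact Ico_disjoint_Ico_same

lemma parent_minus_or_parent_plus (J : DyadicI) : J.parent.minus = J ∨ J.parent.plus = J := by
  have hk : J.parent.k = J.k / 2 := Int.fdiv_eq_ediv_of_nonneg _ zero_le_two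
  obtain ⟨n, k⟩ := J
  simp only [parent] at hk
  simp only [minus, plus, parent, hk, mk.injEq, sub_add_cancel, true_and]
  omega

lemma set_subset_parent_set (J : DyadicI) : J.set ⊆ J.parent.set := by
  rw [← J.parent.set_minus_union_set_plus_s1]
  rcases J.parent_minus_or_parent_plus with h | h <;> rw [h]
  exacts [subset_union_left, subset_union_right]

lemma len_parent (J : DyadicI) : J.parent.len = 2 * J.len := by
  rcases J.parent_minus_or_parent_plus with h | h <;> nth_rewrite 2 [← h]
  · rw [len_minus_s1]; ring
  · rw [len_plus_s1]; ring

variable {v : ℝ → ℝ}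

lemma intg_nonneg (hv : ∀ᵐ x, 0 ≤ v x) (I : DyadicI) : 0 ≤ intg v I :=
  setIntegral_nonneg_ae (measurableSet_set_s1 _) (hv.mono fun _ hx _ => hx)

lemma intg_eq_intg_minus_add_intg_plus {I : DyadicI} (hm : IntegrableOn v I.minus.set)
    (hp : IntegrableOn v I.plus.set) : intg v I = intg v I.minus + intg v I.plus := by
  rw [intg, intg, intg, ← I.set_minus_union_set_plus_s1,
    setIntegral_union I.disjoint_set_minus_set_plus (measurableSet_set_s1 _) hm hp]

lemma avg_eq_intg_div_len (I : DyadicI) : I.avg v = intg v I / I.len := rfl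

lemma avg_nonneg (hv : ∀ᵐ x, 0 ≤ v x) (I : DyadicI) : 0 ≤ I.avg v :=
  div_nonneg (intg_nonneg hv I) I.len_pos_s1.le

lemma haar_mul_whaar_mul (I : DyadicI) (x : ℝ) :
    I.haar x * I.whaar v x * v x =
      (√(intg v I.minus / intg v I.plus) * I.plus.set.indicator v x
        + √(intg v I.plus / intg v I.minus) * I.minus.set.indicator v x)
        / (√I.len * √(intg v I)) := by
  by_cases hm : x ∈ I.minus.set
  · have hp : x ∉ I.plus.set := disjoint_left.mp I.disjoint_set_minus_set_plus hm
    simp only [haar, whaar, indicator_of_mem hm, indicator_of_notMem hp]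
    ring
  · by_cases hp : x ∈ I.plus.set
    · simp only [haar, whaar, indicator_of_mem hp, indicator_of_notMem hm]
      ring
    · simp only [haar, whaar, indicator_of_notMem hp, indicator_of_notMem hm]
      ring

lemma wip_haar_whaar {I : DyadicI} (hm : IntegrableOn v I.minus.set)
    (hp : IntegrableOn v I.plus.set) :
    wip v I.haar (I.whaar v) =
      (√(intg v I.minus / intg v I.plus) * intg v I.plus
        + √(intg v I.plus / intg v I.minus) * intg v I.minus)
        / (√I.len * √(intg v I.minus + intg v I.plus)) := by
  have hp' : Integrable (I.plus.set.indicator v) :=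
    (integrable_indicator_iff I.plus.measurableSet_set_s1).2 hp
  have hm' : Integrable (I.minus.set.indicator v) :=
    (integrable_indicator_iff I.minus.measurableSet_set_s1).2 hm
  simp only [wip, haar_mul_whaar_mul, integral_div,
    integral_add (hp'.const_mul _) (hm'.const_mul _), integral_const_mul,
    integral_indicator I.plus.measurableSet_set_s1, integral_indicator I.minus.measurableSet_set_s1,
    ← intg_eq_intg_minus_add_intg_plus hm hp]
  rfl

lemma whaar_eq_zero {I : DyadicI} (h : intg v I.minus = 0 ∨ intg v I.plus = 0) :
    I.whaar v = 0 := by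
  funext x
  rcases h with h | h <;> simp [whaar, h]

lemma abs_wip_haar_whaar_le_sqrt_avg (hv : ∀ᵐ x, 0 ≤ v x) (I : DyadicI) :
    |wip v I.haar (I.whaar v)| ≤ √(I.avg v) := by
  by_cases hint : IntegrableOn v I.minus.set ∧ IntegrableOn v I.plus.set
  · obtain ⟨hm, hp⟩ := hint
    have hVm := intg_nonneg hv I.minus
    have hVp := intg_nonneg hv I.plus
    rw [wip_haar_whaar hm hp, Real.sqrt_div_mul_eq_sqrt_mul_sqrt hVp,
      Real.sqrt_div_mul_eq_sqrt_mul_sqrt hVm,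
      avg_eq_intg_div_len, intg_eq_intg_minus_add_intg_plus hm hp,
      ← Real.div_sqrt_mul_sqrt_eq_sqrt_div _ I.len_pos_s1.le, abs_of_nonneg (by positivity)]
    refine div_le_div_of_nonneg_right ?_ (by positivity)
    calc √(intg v I.minus) * √(intg v I.plus) + √(intg v I.plus) * √(intg v I.minus)
        = 2 * √(intg v I.minus) * √(intg v I.plus) := by ring
      _ ≤ √(intg v I.minus) ^ 2 + √(intg v I.plus) ^ 2 := two_mul_le_add_sq _ _
      _ = intg v I.minus + intg v I.plus := by rw [Real.sq_sqrt hVm, Real.sq_sqrt hVp]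
  -- a non-integrable half has the junk integral `0`, which makes `h^v_I` vanish
  · have hzero : intg v I.minus = 0 ∨ intg v I.plus = 0 := by
      rw [not_and_or] at hint
      exact hint.imp integral_undef integral_undef
    simp [wip, whaar_eq_zero hzero]

lemma avg_le_two_mul_avg_parent (hloc : LocallyIntegrable v) (hv : ∀ᵐ x, 0 ≤ v x)
    (J : DyadicI) : J.avg v ≤ 2 * J.parent.avg v := by
  have hJ : intg v J ≤ intg v J.parent :=
    setIntegral_mono_set ((hloc.integrableOn_isCompact isCompact_Icc).mono_set Ico_subset_Icc_self)
      (ae_restrict_of_ae hv) J.set_subset_parent_set.eventuallyLE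
  calc J.avg v ≤ intg v J.parent / J.len := div_le_div_of_nonneg_right hJ J.len_pos_s1.le
    _ = 2 * J.parent.avg v := by
      rw [avg_eq_intg_div_len, len_parent]
      field_simp

end DyadicI

/-- `|⟨h_Ĵ, h^{w⁻¹}_Ĵ⟩_{w⁻¹} ⟨h_J, h^w_J⟩_w| ≤ √2 [w]_{A₂^d}^{1/2}`. -/
theorem stmt1 (w : ℝ → ℝ) (hw : IsWeight w) (hA : MemA2d w) (J : DyadicI) :
    |wip (winv w) (DyadicI.haar J.parent) (DyadicI.whaar (winv w) J.parent) *
        wip w (DyadicI.haar J) (DyadicI.whaar w J)| ≤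
      Real.sqrt 2 * Real.sqrt (A2d w) := by
  have hw_nonneg : ∀ᵐ x, 0 ≤ w x := hw.2.mono fun _ hx => hx.le
  have hw_inv : ∀ᵐ x, 0 ≤ winv w x := hw_nonneg.mono fun _ hx => inv_nonneg.2 hx
  rw [abs_mul, ← Real.sqrt_mul zero_le_two]
  calc _ ≤ √(J.parent.avg (winv w)) * √(J.avg w) :=
        mul_le_mul (DyadicI.abs_wip_haar_whaar_le_sqrt_avg hw_inv _)
          (DyadicI.abs_wip_haar_whaar_le_sqrt_avg hw_nonneg _) (abs_nonneg _) (Real.sqrt_nonneg _)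
    _ ≤ √(J.parent.avg (winv w)) * √(2 * J.parent.avg w) := by
        gcongr
        exact DyadicI.avg_le_two_mul_avg_parent hw.1 hw_nonneg J
    _ = √(2 * (J.parent.avg w * J.parent.avg (winv w))) := by
        rw [← Real.sqrt_mul (DyadicI.avg_nonneg hw_inv _)]
        ring_nf
    _ ≤ √(2 * A2d w) := by
        gcongr
        exact le_ciSup hA J.parent
end

section
/- If w ∈ A₂^d then there exists an absolute constant C such that for all dyadic intervals J, (1/|J|) ∑_{I ∈ D(J)} ((⟨w⟩_{I₊} − ⟨w⟩_{I₋})/⟨w⟩_I)² |I| ⟨w⟩_I ⟨w^{-1}⟩_I ≤ C [w]_{A₂^d}. -/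
open MeasureTheory Set

namespace A2P
open DyadicI MeasureTheory Set

lemma len_pos (I : DyadicI) : 0 < I.len := zpow_pos (by norm_num) _

lemma zpow_half (n : ℤ) : (2:ℝ) ^ (-(n+1)) = 2 ^ (-n) / 2 := by
  rw [show -(n+1) = -n + (-1) by ring, zpow_add₀ (by norm_num : (2:ℝ) ≠ 0)]
  norm_num
  ring

lemma minus_len (I : DyadicI) : I.minus.len = I.len / 2 := by
  simp only [DyadicI.len, DyadicI.minus]
  exact zpow_half I.n

lemma plus_len (I : DyadicI) : I.plus.len = I.len / 2 := by
  simp only [DyadicI.len, DyadicI.plus]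
  exact zpow_half I.n

lemma minus_left (I : DyadicI) : I.minus.left = I.left := by
  simp only [DyadicI.left, minus_len, DyadicI.minus, DyadicI.len, zpow_half]
  push_cast
  ring

lemma plus_left (I : DyadicI) : I.plus.left = I.left + I.len / 2 := by
  simp only [DyadicI.left, plus_len, minus_len, DyadicI.plus, DyadicI.minus, DyadicI.len, zpow_half]
  push_cast
  ring

lemma minus_set (I : DyadicI) : I.minus.set = Set.Ico I.left (I.left + I.len / 2) := by
  rw [DyadicI.set, minus_left, minus_len]

lemma plus_set (I : DyadicI) : I.plus.set = Set.Ico (I.left + I.len / 2) (I.left + I.len) := by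
  rw [DyadicI.set, plus_left, plus_len]; ring_nf

lemma union_halves (I : DyadicI) : I.minus.set ∪ I.plus.set = I.set := by
  rw [minus_set, plus_set, DyadicI.set]
  exact Set.Ico_union_Ico_eq_Ico (by linarith [len_pos I]) (by linarith [len_pos I])

lemma disjoint_halves (I : DyadicI) : Disjoint I.minus.set I.plus.set := by
  rw [minus_set, plus_set]; exact Set.Ico_disjoint_Ico_same

lemma set_nonempty (I : DyadicI) : I.set.Nonempty :=
  ⟨I.left, by simp [DyadicI.set]; linarith [len_pos I]⟩

lemma subset_n_le {I K : DyadicI} (h : I.set ⊆ K.set) : K.n ≤ I.n := by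
  rw [DyadicI.set, DyadicI.set, Set.Ico_subset_Ico_iff (by linarith [len_pos I])] at h
  have hlen : I.len ≤ K.len := by linarith [h.1, h.2]
  have := (zpow_le_zpow_iff_right₀ (by norm_num : (1:ℝ) < 2)).mp hlen
  omega

lemma subset_endpoints {I K : DyadicI} (h : I.set ⊆ K.set) :
    K.left ≤ I.left ∧ I.left + I.len ≤ K.left + K.len := by
  rw [DyadicI.set, DyadicI.set, Set.Ico_subset_Ico_iff (by linarith [len_pos I])] at h
  exact h

lemma eq_of_subset_n_eq {I K : DyadicI} (h : I.set ⊆ K.set) (hn : I.n = K.n) : I = K := by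
  have he := subset_endpoints h
  have hlen : I.len = K.len := by rw [DyadicI.len, DyadicI.len, hn]
  have hleft : I.left = K.left := le_antisymm (by linarith [he.1, he.2]) he.1
  have hk : I.k = K.k := by
    have : (I.k : ℝ) * I.len = K.k * K.len := hleft
    rw [hlen] at this
    have := mul_right_cancel₀ (ne_of_gt (len_pos K)) this
    exact_mod_cast this
  cases I; cases K; simp_all

lemma subset_half {I K : DyadicI} (h : I.set ⊆ K.set) (hne : I ≠ K) :
    I.set ⊆ K.minus.set ∨ I.set ⊆ K.plus.set := by
  have hn : K.n < I.n := by
    rcases lt_or_eq_of_le (subset_n_le h) with h' | h'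
    · exact h'
    · exact absurd (eq_of_subset_n_eq h h'.symm) hne
  have he := subset_endpoints h
  set m : ℝ := K.left + K.len / 2 with hm
  -- m as an integer multiple of I.len
  have hmul : m = ((2 * K.k + 1) * 2 ^ (I.n - K.n - 1).toNat : ℤ) * I.len := by
    have h1 : ((I.n - K.n - 1).toNat : ℤ) = I.n - K.n - 1 := Int.toNat_of_nonneg (by omega)
    have h2 : ((2:ℝ) ^ (I.n - K.n - 1).toNat) = (2:ℝ) ^ ((I.n - K.n - 1 : ℤ)) := by
      rw [← zpow_natCast]
      exact congrArg _ h1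
    have h3 : (2:ℝ) ^ (I.n - K.n - 1 : ℤ) * (2:ℝ) ^ (-I.n) = (2:ℝ) ^ (-(K.n+1)) := by
      rw [← zpow_add₀ (by norm_num : (2:ℝ) ≠ 0)]
      congr 1
      ring
    push_cast
    rw [h2, hm, DyadicI.left, DyadicI.len, DyadicI.len, mul_assoc, h3, zpow_half]
    ring
  set M : ℤ := (2 * K.k + 1) * 2 ^ (I.n - K.n - 1).toNat with hM
  have key : I.left + I.len ≤ m ∨ m ≤ I.left := by
    by_contra hcon
    push_neg at hcon
    obtain ⟨h1, h2⟩ := hcon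
    have hIl : I.left = (I.k : ℝ) * I.len := rfl
    have hlt1 : (I.k : ℝ) * I.len < M * I.len := by rw [← hIl, ← hmul]; exact h2
    have hlt2 : (M : ℝ) * I.len < (I.k + 1) * I.len := by
      rw [← hmul]; push_cast; rw [add_mul, one_mul, ← hIl]; exact h1
    have hk1 : I.k < M := by
      have := lt_of_mul_lt_mul_right hlt1 (len_pos I).le; exact_mod_cast this
    have hk2 : (M : ℝ) < I.k + 1 := lt_of_mul_lt_mul_right hlt2 (len_pos I).le
    have : M < I.k + 1 := by exact_mod_cast hk2
    omega
  rcases key with hc | hc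
  · left
    rw [minus_set]
    intro x hx
    rw [DyadicI.set] at hx
    exact ⟨le_trans he.1 hx.1, lt_of_lt_of_le hx.2 hc⟩
  · right
    rw [plus_set]
    intro x hx
    rw [DyadicI.set] at hx
    exact ⟨le_trans hc hx.1, lt_of_lt_of_le hx.2 (by linarith [he.2])⟩

end A2P
namespace A2P

noncomputable def gB (Q v : ℝ) : ℝ := 4 * Real.sqrt (Q * v) - v

lemma gB_nonneg {Q v : ℝ} (hv : 0 ≤ v) (hvQ : v ≤ Q) : 0 ≤ gB Q v := by
  have h1 : Real.sqrt (v * v) ≤ Real.sqrt (Q * v) :=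
    Real.sqrt_le_sqrt (mul_le_mul_of_nonneg_right hvQ hv)
  have h2 : Real.sqrt (v * v) = v := Real.sqrt_mul_self hv
  rw [gB]; linarith [h1, h2, hv]

lemma gB_le {Q v : ℝ} (hv : 0 ≤ v) (hvQ : v ≤ Q) : gB Q v ≤ 4 * Q := by
  have hQ : 0 ≤ Q := le_trans hv hvQ
  have h1 : Real.sqrt (Q * v) ≤ Real.sqrt (Q * Q) :=
    Real.sqrt_le_sqrt (mul_le_mul_of_nonneg_left hvQ hQ)
  have h2 : Real.sqrt (Q * Q) = Q := Real.sqrt_mul_self hQ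
  rw [gB]; linarith [h1, h2, hv]

set_option maxHeartbeats 1000000 in
/-- Key algebraic (Bellman) inequality. -/
lemma lemA {Q a b c d : ℝ} (ha : 0 < a) (hb : 0 < b) (hc : 0 < c) (hd : 0 < d)
    (hQ : ((a + b) / 2) * ((c + d) / 2) ≤ Q) :
    ((a - b) / ((a + b) / 2)) ^ 2 * ((a + b) / 2) * ((c + d) / 2) ≤
      16 * (gB Q (((a + b) / 2) * ((c + d) / 2)) - gB Q (a * c) / 2 - gB Q (b * d) / 2) := by
  have hQ0 : 0 ≤ Q := le_trans (by positivity) hQ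
  set p := Real.sqrt a with hp
  set q := Real.sqrt b with hq
  set r := Real.sqrt c with hr
  set s := Real.sqrt d with hs
  have hp2 : p ^ 2 = a := Real.sq_sqrt ha.le
  have hq2 : q ^ 2 = b := Real.sq_sqrt hb.le
  have hr2 : r ^ 2 = c := Real.sq_sqrt hc.le
  have hs2 : s ^ 2 = d := Real.sq_sqrt hd.le
  have hp0 : 0 < p := Real.sqrt_pos.mpr ha
  have hq0 : 0 < q := Real.sqrt_pos.mpr hb
  have hr0 : 0 < r := Real.sqrt_pos.mpr hc
  have hs0 : 0 < s := Real.sqrt_pos.mpr hd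
  set T := Real.sqrt ((a + b) * (c + d)) with hT
  have hT0 : 0 ≤ T := Real.sqrt_nonneg _
  have hT2 : T ^ 2 = (a + b) * (c + d) := Real.sq_sqrt (by positivity)
  set SQ := Real.sqrt Q with hSQ
  have hSQ0 : 0 ≤ SQ := Real.sqrt_nonneg _
  have hSQ2 : SQ ^ 2 = Q := Real.sq_sqrt hQ0
  have hprqs : p * r + q * s ≤ T := by
    rw [hT]
    rw [Real.le_sqrt (by positivity) (by positivity)]
    rw [← hp2, ← hq2, ← hr2, ← hs2]
    linarith [sq_nonneg (p * s - q * r)]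
  have h2SQ : T ≤ 2 * SQ := by
    have : T / 2 ≤ SQ := by
      rw [hSQ, Real.le_sqrt (by positivity) hQ0]
      linarith [hT2, hQ]
    linarith
  -- rewrite the square roots
  have e1 : Real.sqrt (Q * (((a + b) / 2) * ((c + d) / 2))) = SQ * (T / 2) := by
    rw [Real.sqrt_mul hQ0, show ((a + b) / 2) * ((c + d) / 2) = (T / 2) ^ 2 by
      rw [div_pow, hT2]; ring, Real.sqrt_sq (by positivity)]
  have e2 : Real.sqrt (Q * (a * c)) = SQ * (p * r) := by
    rw [Real.sqrt_mul hQ0, Real.sqrt_mul ha.le, ← hp, ← hr]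
  have e3 : Real.sqrt (Q * (b * d)) = SQ * (q * s) := by
    rw [Real.sqrt_mul hQ0, Real.sqrt_mul hb.le, ← hq, ← hs]
  rw [gB, gB, gB, e1, e2, e3]
  have hT2' : T ^ 2 = (p ^ 2 + q ^ 2) * (r ^ 2 + s ^ 2) := by
    rw [hT2, ← hp2, ← hq2, ← hr2, ← hs2]
  -- left side equals (a-b)^2 (c+d)/(a+b)
  have key : ((a - b) / ((a + b) / 2)) ^ 2 * ((a + b) / 2) * ((c + d) / 2) =
      (a - b) ^ 2 * (c + d) / (a + b) := by
    field_simp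
  rw [key]
  have claim3 : (a - b) ^ 2 * (c + d) / (a + b) ≤ 2 * (p - q) ^ 2 * (r + s) ^ 2 := by
    rw [div_le_iff₀ (by positivity)]
    rw [← hp2, ← hq2, ← hr2, ← hs2]
    have hA : (p + q) ^ 2 ≤ 2 * (p ^ 2 + q ^ 2) := by linarith [sq_nonneg (p - q)]
    have hB : r ^ 2 + s ^ 2 ≤ (r + s) ^ 2 := by linarith [mul_pos hr0 hs0]
    have hP : (p + q) ^ 2 * (r ^ 2 + s ^ 2) ≤ 2 * (p ^ 2 + q ^ 2) * ((r + s) ^ 2) :=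
      mul_le_mul hA hB (by positivity) (by positivity)
    linarith [mul_le_mul_of_nonneg_left hP (sq_nonneg (p - q))]
  refine le_trans claim3 ?_
  rw [← hp2, ← hq2, ← hr2, ← hs2]
  -- chain of estimates
  have cA : T * (T - (p * r + q * s)) ≤ 2 * SQ * (T - (p * r + q * s)) :=
    mul_le_mul_of_nonneg_right h2SQ (by linarith)
  have cB : (T ^ 2 - (p * r + q * s) ^ 2) / 2 ≤ T * (T - (p * r + q * s)) := by
    linarith [sq_nonneg (T - (p * r + q * s))]
  have cC : T ^ 2 - (p * r + q * s) ^ 2 = (p * s - q * r) ^ 2 := by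
    rw [hT2']; ring
  have step1 : (p * s - q * r) ^ 2 / 2 ≤ 2 * SQ * (T - (p * r + q * s)) := by
    linarith [cA, cB, cC]
  have idty : (p * s - q * r) ^ 2 / 2 + (p * r) ^ 2 / 2 + (q * s) ^ 2 / 2 - T ^ 2 / 4 =
      (1 / 8) * ((p - q) ^ 2 * (r + s) ^ 2 + (p + q) ^ 2 * (r - s) ^ 2) := by
    linear_combination (-(1:ℝ) / 4) * hT2'
  linarith [step1, idty, hT2', sq_nonneg ((p + q) * (r - s)), mul_nonneg (sq_nonneg (p + q)) (sq_nonneg (r - s))]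

end A2P
namespace A2P
open DyadicI MeasureTheory Set

lemma volume_set (I : DyadicI) : volume I.set = ENNReal.ofReal I.len := by
  rw [DyadicI.set, Real.volume_Ico]
  ring_nf

lemma integrableOn_w {w : ℝ → ℝ} (hw : LocallyIntegrable w volume) (I : DyadicI) :
    IntegrableOn w I.set volume :=
  (hw.integrableOn_isCompact (isCompact_Icc (a := I.left) (b := I.left + I.len))).mono_set
    Set.Ico_subset_Icc_self

lemma avg_eq (f : ℝ → ℝ) (I : DyadicI) : avg f I = (∫ x in I.set, f x) / I.len := rfl

lemma intg_split {f : ℝ → ℝ} {I : DyadicI} (hf : IntegrableOn f I.set volume) :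
    (∫ x in I.set, f x) = (∫ x in I.minus.set, f x) + (∫ x in I.plus.set, f x) := by
  rw [← union_halves I]
  exact setIntegral_union (disjoint_halves I) measurableSet_Ico
    (hf.mono_set (by rw [← union_halves I]; exact Set.subset_union_left))
    (hf.mono_set (by rw [← union_halves I]; exact Set.subset_union_right))

lemma avg_split {f : ℝ → ℝ} {I : DyadicI} (hf : IntegrableOn f I.set volume) :
    avg f I = (avg f I.minus + avg f I.plus) / 2 := by
  rw [avg_eq, avg_eq, avg_eq, intg_split hf, minus_len, plus_len]
  have := len_pos I
  field_simp

lemma avg_nonneg {f : ℝ → ℝ} (h0 : ∀ᵐ x ∂(volume : Measure ℝ), 0 < f x) (I : DyadicI) :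
    0 ≤ avg f I := by
  rw [avg_eq]
  apply div_nonneg _ (len_pos I).le
  apply integral_nonneg_of_ae
  filter_upwards [ae_restrict_of_ae h0] with x hx using hx.le

lemma avg_pos {f : ℝ → ℝ} {I : DyadicI} (hf : IntegrableOn f I.set volume)
    (h0 : ∀ᵐ x ∂(volume : Measure ℝ), 0 < f x) : 0 < avg f I := by
  rw [avg_eq]
  apply div_pos _ (len_pos I)
  rw [setIntegral_pos_iff_support_of_nonneg_ae
    (by filter_upwards [ae_restrict_of_ae h0] with x hx using hx.le) hf]
  have hnull := MeasureTheory.ae_iff.mp h0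
  have hsub : I.set ⊆ (Function.support f ∩ I.set) ∪ {x | ¬ 0 < f x} := by
    intro x hx
    by_cases hfx : 0 < f x
    · exact Or.inl ⟨ne_of_gt hfx, hx⟩
    · exact Or.inr hfx
  have hIpos : 0 < volume I.set := by
    rw [volume_set]
    exact ENNReal.ofReal_pos.mpr (len_pos I)
  have h2 := (measure_mono (μ := (volume : Measure ℝ)) hsub).trans (measure_union_le _ _)
  rw [hnull, add_zero] at h2
  exact lt_of_lt_of_le hIpos h2

lemma winv_pos {w : ℝ → ℝ} (hpos : ∀ᵐ x ∂(volume : Measure ℝ), 0 < w x) :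
    ∀ᵐ x ∂(volume : Measure ℝ), 0 < winv w x := by
  filter_upwards [hpos] with x hx
  exact inv_pos.mpr hx

/-- the summand -/
noncomputable def termI (w : ℝ → ℝ) (I : DyadicI) : ℝ :=
  ((DyadicI.avg w I.plus - DyadicI.avg w I.minus) / DyadicI.avg w I) ^ 2 *
    I.len * DyadicI.avg w I * DyadicI.avg (winv w) I

noncomputable def uI (w : ℝ → ℝ) (I : DyadicI) : ℝ := avg w I * avg (winv w) I

noncomputable def phi (w : ℝ → ℝ) (Q : ℝ) (I : DyadicI) : ℝ := I.len * gB Q (uI w I)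

open Classical in
noncomputable def psi (w : ℝ → ℝ) (Q : ℝ) (I : DyadicI) : ℝ :=
  if IntegrableOn (winv w) I.set volume then phi w Q I else 4 * Q * I.len

lemma psi_pos {w : ℝ → ℝ} {Q : ℝ} {I : DyadicI} (h : IntegrableOn (winv w) I.set volume) :
    psi w Q I = phi w Q I := by
  rw [psi, if_pos h]

lemma psi_neg {w : ℝ → ℝ} {Q : ℝ} {I : DyadicI} (h : ¬ IntegrableOn (winv w) I.set volume) :
    psi w Q I = 4 * Q * I.len := by
  rw [psi, if_neg h]

section main
variable {w : ℝ → ℝ} {Q : ℝ}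
variable (hw : LocallyIntegrable w volume) (hpos : ∀ᵐ x ∂(volume : Measure ℝ), 0 < w x)
variable (hQle : ∀ I : DyadicI, avg w I * avg (winv w) I ≤ Q) (hQ0 : 0 ≤ Q)

include hpos in
lemma uI_nonneg (I : DyadicI) : 0 ≤ uI w I :=
  mul_nonneg (avg_nonneg hpos I) (avg_nonneg (winv_pos hpos) I)

include hpos hQle in
lemma psi_le (I : DyadicI) : psi w Q I ≤ 4 * Q * I.len := by
  rw [psi]
  split
  · rw [phi, mul_comm (4 * Q) I.len]
    exact mul_le_mul_of_nonneg_left (gB_le (uI_nonneg hpos I) (hQle I)) (len_pos I).le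
  · exact le_rfl

include hpos hQle hQ0 in
lemma psi_nonneg (I : DyadicI) : 0 ≤ psi w Q I := by
  rw [psi]
  split
  · exact mul_nonneg (len_pos I).le (gB_nonneg (uI_nonneg hpos I) (hQle I))
  · exact mul_nonneg (by linarith) (len_pos I).le

include hpos in
lemma termI_nonneg (I : DyadicI) : 0 ≤ termI w I := by
  rw [termI]
  have := avg_nonneg hpos I
  have := avg_nonneg (winv_pos hpos) I
  have := len_pos I
  positivity

include hw hpos hQle hQ0 in
lemma stepL (K : DyadicI) :
    termI w K + 16 * psi w Q K.minus + 16 * psi w Q K.plus ≤ 16 * psi w Q K := by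
  by_cases hG : IntegrableOn (winv w) K.set volume
  · have hGm : IntegrableOn (winv w) K.minus.set volume :=
      hG.mono_set (by rw [← union_halves K]; exact Set.subset_union_left)
    have hGp : IntegrableOn (winv w) K.plus.set volume :=
      hG.mono_set (by rw [← union_halves K]; exact Set.subset_union_right)
    set a := avg w K.plus with hA
    set b := avg w K.minus with hB
    set c := avg (winv w) K.plus with hC
    set d := avg (winv w) K.minus with hD
    have ha : 0 < a := avg_pos (integrableOn_w hw _) hpos
    have hb : 0 < b := avg_pos (integrableOn_w hw _) hpos
    have hc : 0 < c := avg_pos hGp (winv_pos hpos)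
    have hd : 0 < d := avg_pos hGm (winv_pos hpos)
    have hKw : avg w K = (a + b) / 2 := by
      rw [avg_split (integrableOn_w hw K)]; rw [hA, hB]; ring
    have hKv : avg (winv w) K = (c + d) / 2 := by
      rw [avg_split hG]; rw [hC, hD]; ring
    have hQK : ((a + b) / 2) * ((c + d) / 2) ≤ Q := by
      rw [← hKw, ← hKv]; exact hQle K
    have lem := lemA ha hb hc hd hQK
    have hterm : termI w K = ((a - b) / ((a + b) / 2)) ^ 2 * ((a + b) / 2) * ((c + d) / 2) * K.len := by
      rw [termI, hKw, hKv]; ring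
    have hphi : 16 * (phi w Q K - phi w Q K.minus - phi w Q K.plus)
        = 16 * (K.len * (gB Q (((a + b) / 2) * ((c + d) / 2)) - gB Q (a * c) / 2 - gB Q (b * d) / 2)) := by
      rw [phi, phi, phi, uI, uI, uI, hKw, hKv, minus_len, plus_len]
      rw [← hA, ← hB, ← hC, ← hD]
      ring_nf
    rw [psi_pos hG, psi_pos hGm, psi_pos hGp]
    have hlem := mul_le_mul_of_nonneg_right lem (len_pos K).le
    rw [hterm]
    linarith [hlem, hphi]
  · have hterm : termI w K = 0 := by
      rw [termI, avg_eq (winv w) K, integral_undef hG]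
      simp
    rw [hterm, psi_neg hG]
    have h1 := psi_le hpos hQle K.minus
    have h2 := psi_le hpos hQle K.plus
    rw [minus_len] at h1
    rw [plus_len] at h2
    linarith

include hw hpos hQle hQ0 in
lemma tree : ∀ (N : ℕ) (K : DyadicI) (S : Finset DyadicI),
    (∀ I ∈ S, I.set ⊆ K.set ∧ I.n ≤ K.n + N) → ∑ I ∈ S, termI w I ≤ 16 * psi w Q K := by
  intro N
  induction N with
  | zero =>
    intro K S hS
    have hsub : S ⊆ {K} := by
      intro I hI
      obtain ⟨h1, h2⟩ := hS I hI
      have h3 := subset_n_le h1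
      rw [Finset.mem_singleton]
      exact eq_of_subset_n_eq h1 (by omega)
    have hKle : termI w K ≤ 16 * psi w Q K := by
      have hstep := stepL hw hpos hQle hQ0 K
      have hm := psi_nonneg hpos hQle hQ0 K.minus
      have hp := psi_nonneg hpos hQle hQ0 K.plus
      linarith
    rcases Finset.subset_singleton_iff.mp hsub with h | h
    · rw [h, Finset.sum_empty]
      have := psi_nonneg hpos hQle hQ0 K
      linarith
    · rw [h, Finset.sum_singleton]
      exact hKle
  | succ N ih =>
    intro K S hS
    classical
    set Sm := S.filter (fun I => I.set ⊆ K.minus.set) with hSm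
    set Sp := S.filter (fun I => I.set ⊆ K.plus.set) with hSp
    have hKm : K ∉ Sm ∪ Sp := by
      intro hK
      rcases Finset.mem_union.mp hK with h | h
      · have := subset_n_le (Finset.mem_filter.mp h).2
        simp only [DyadicI.minus] at this
        omega
      · have := subset_n_le (Finset.mem_filter.mp h).2
        simp only [DyadicI.plus] at this
        omega
    have hsub : S ⊆ insert K (Sm ∪ Sp) := by
      intro I hI
      by_cases hIK : I = K
      · simp [hIK]
      · rcases subset_half (hS I hI).1 hIK with h | h
        · exact Finset.mem_insert_of_mem (Finset.mem_union_left _ (Finset.mem_filter.mpr ⟨hI, h⟩))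
        · exact Finset.mem_insert_of_mem (Finset.mem_union_right _ (Finset.mem_filter.mpr ⟨hI, h⟩))
    have hdisj : Disjoint Sm Sp := by
      rw [Finset.disjoint_left]
      intro I h1 h2
      have hs1 := (Finset.mem_filter.mp h1).2
      have hs2 := (Finset.mem_filter.mp h2).2
      obtain ⟨x, hx⟩ := set_nonempty I
      exact Set.disjoint_left.mp (disjoint_halves K) (hs1 hx) (hs2 hx)
    have hsum : ∑ I ∈ S, termI w I ≤ termI w K + (∑ I ∈ Sm, termI w I + ∑ I ∈ Sp, termI w I) := by
      calc ∑ I ∈ S, termI w I ≤ ∑ I ∈ insert K (Sm ∪ Sp), termI w I :=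
            Finset.sum_le_sum_of_subset_of_nonneg hsub (fun i _ _ => termI_nonneg hpos i)
        _ = termI w K + ∑ I ∈ Sm ∪ Sp, termI w I := Finset.sum_insert hKm
        _ = termI w K + (∑ I ∈ Sm, termI w I + ∑ I ∈ Sp, termI w I) := by
            rw [Finset.sum_union hdisj]
    have hIHm : ∑ I ∈ Sm, termI w I ≤ 16 * psi w Q K.minus := by
      apply ih K.minus Sm
      intro I hI
      refine ⟨(Finset.mem_filter.mp hI).2, ?_⟩
      have h2 := (hS I (Finset.mem_filter.mp hI).1).2
      simp only [DyadicI.minus]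
      push_cast at h2 ⊢
      omega
    have hIHp : ∑ I ∈ Sp, termI w I ≤ 16 * psi w Q K.plus := by
      apply ih K.plus Sp
      intro I hI
      refine ⟨(Finset.mem_filter.mp hI).2, ?_⟩
      have h2 := (hS I (Finset.mem_filter.mp hI).1).2
      simp only [DyadicI.plus]
      push_cast at h2 ⊢
      omega
    have hstep := stepL hw hpos hQle hQ0 K
    linarith

end main
end A2P
/-- `(1/|J|) ∑_{I⊆J} ((⟨w⟩_{I₊}−⟨w⟩_{I₋})/⟨w⟩_I)² |I| ⟨w⟩_I⟨w⁻¹⟩_I ≤ C[w]_{A₂^d}`. -/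
theorem stmt8 : ∃ C > (0:ℝ), ∀ w : ℝ → ℝ, IsWeight w → MemA2d w → ∀ J : DyadicI,
    (1 / J.len) * ∑' I : {I : DyadicI // I.set ⊆ J.set},
        ((DyadicI.avg w I.1.plus - DyadicI.avg w I.1.minus) / DyadicI.avg w I.1) ^ 2 *
          I.1.len * DyadicI.avg w I.1 * DyadicI.avg (winv w) I.1
      ≤ C * A2d w := by
  refine ⟨64, by norm_num, fun w hw hA J => ?_⟩
  obtain ⟨hloc, hpos⟩ := hw
  set Q := A2d w with hQdef
  have hQle : ∀ I : DyadicI, DyadicI.avg w I * DyadicI.avg (winv w) I ≤ Q := fun I => le_ciSup hA I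
  have hQ0 : 0 ≤ Q :=
    le_trans (mul_nonneg (A2P.avg_nonneg hpos J) (A2P.avg_nonneg (A2P.winv_pos hpos) J)) (hQle J)
  have hlen := A2P.len_pos J
  show (1 / J.len) * ∑' I : {I : DyadicI // I.set ⊆ J.set}, A2P.termI w I.1 ≤ 64 * Q
  have htsum : (∑' I : {I : DyadicI // I.set ⊆ J.set}, A2P.termI w I.1) ≤ 64 * Q * J.len := by
    apply tsum_le_of_sum_le' (by positivity)
    intro S
    classical
    have himg : ∑ i ∈ S, A2P.termI w i.1 = ∑ I ∈ S.image Subtype.val, A2P.termI w I := by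
      rw [Finset.sum_image (fun x _ y _ h => Subtype.val_injective h)]
    rw [himg]
    set S' := S.image Subtype.val with hS'
    set N := S'.sup (fun I => (I.n - J.n).toNat) with hN
    have htree := A2P.tree hloc hpos hQle hQ0 N J S' ?_
    · have hpsile := A2P.psi_le hpos hQle J
      calc ∑ I ∈ S', A2P.termI w I ≤ 16 * A2P.psi w Q J := htree
        _ ≤ 16 * (4 * Q * J.len) := by linarith
        _ = 64 * Q * J.len := by ring
    · intro I hI
      obtain ⟨i, hi, rfl⟩ := Finset.mem_image.mp hI
      refine ⟨i.2, ?_⟩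
      have h1 := A2P.subset_n_le i.2
      have h2 : ((i:DyadicI).n - J.n).toNat ≤ N := Finset.le_sup (f := fun I : DyadicI => (I.n - J.n).toNat) hI
      omega
  calc (1 / J.len) * ∑' I : {I : DyadicI // I.set ⊆ J.set}, A2P.termI w I.1
      ≤ (1 / J.len) * (64 * Q * J.len) := by
        apply mul_le_mul_of_nonneg_left htsum (by positivity)
    _ = 64 * Q := by field_simp
end

section
/- The function B(u,v) = (uv)^{1/4} satisfies, on the domain D₀ = {(u,v) ∈ ℝ₊² : uv ≥ 1/2}, the differential inequality −(du,dv) d²B(u,v) (du,dv)ᵗ ≥ (1/8) (v^{1/4}/u^{7/4}) |du|² for all directions (du,dv), where d²B is the Hessian of B. -/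
/-!
For `B(x, y) = (xy)^p` the Hessian quadratic form in the direction `(a, b)` is
`p (xy)^(p-2) ((p-1)((ya)² + (xb)²) + 2p (ya)(xb))`. For `p = 1/4` its negative exceeds
`(1/8) (uv)^(-7/4) (va)² = (1/8) (v^(1/4) / u^(7/4)) a²` by
`(1/16) (uv)^(-7/4) ((va - ub)² + 2(ub)²)`.
-/

open Topology

section MulRpow

variable (p : ℝ) {c x y : ℝ}

theorem hasDerivAt_mul_const_rpow (h : x * c ≠ 0) :
    HasDerivAt (fun t => (t * c) ^ p) (p * (x * c) ^ (p - 1) * c) x := by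
  simpa [Function.comp_def] using
    (Real.hasDerivAt_rpow_const (Or.inl h)).comp x ((hasDerivAt_id x).mul_const c)

theorem hasDerivAt_const_mul_rpow (h : c * x ≠ 0) :
    HasDerivAt (fun t => (c * t) ^ p) (p * (c * x) ^ (p - 1) * c) x := by
  simpa only [mul_comm c] using hasDerivAt_mul_const_rpow p (mul_comm c x ▸ h)

theorem deriv_deriv_mul_const_rpow (h : x * c ≠ 0) :
    deriv (fun s => deriv (fun t => (t * c) ^ p) s) x =
      p * (p - 1) * (x * c) ^ (p - 2) * c ^ 2 := by
  have hderiv : (fun s => deriv (fun t => (t * c) ^ p) s) =ᶠ[𝓝 x]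
      fun s => p * (s * c) ^ (p - 1) * c :=
    ((continuousAt_id.mul_const c).eventually_ne h).mono fun s hs =>
      (hasDerivAt_mul_const_rpow p hs).deriv
  rw [hderiv.deriv_eq, (((hasDerivAt_mul_const_rpow (p - 1) h).const_mul p).mul_const c).deriv,
    show p - 1 - 1 = p - 2 by ring]
  ring

theorem deriv_deriv_const_mul_rpow (h : c * x ≠ 0) :
    deriv (fun s => deriv (fun t => (c * t) ^ p) s) x =
      p * (p - 1) * (c * x) ^ (p - 2) * c ^ 2 := by
  simpa only [mul_comm c] using deriv_deriv_mul_const_rpow p (mul_comm c x ▸ h)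

theorem deriv_deriv_mul_rpow_mixed (h : x * y ≠ 0) :
    deriv (fun s => deriv (fun t => (t * s) ^ p) x) y = p ^ 2 * (x * y) ^ (p - 2) * (x * y) := by
  have hderiv : (fun s => deriv (fun t => (t * s) ^ p) x) =ᶠ[𝓝 y]
      fun s => p * (x * s) ^ (p - 1) * s :=
    ((continuousAt_const.mul continuousAt_id).eventually_ne h).mono fun s hs =>
      (hasDerivAt_mul_const_rpow p hs).deriv
  rw [hderiv.deriv_eq, (((hasDerivAt_const_mul_rpow (p - 1) h).const_mul p).fun_mul
    (hasDerivAt_id' y)).deriv, show p - 1 - 1 = p - 2 by ring]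
  have hpow : (x * y) ^ (p - 1) = (x * y) ^ (p - 2) * (x * y) := by
    rw [show p - 2 = p - 1 - 1 by ring, Real.rpow_sub_one h (p - 1), div_mul_cancel₀ _ h]
  rw [hpow]
  ring

theorem hessian_form_mul_rpow (a b : ℝ) (h : x * y ≠ 0) :
    a ^ 2 * deriv (fun s => deriv (fun t => (t * y) ^ p) s) x
        + 2 * a * b * deriv (fun s => deriv (fun t => (t * s) ^ p) x) y
        + b ^ 2 * deriv (fun s => deriv (fun t => (x * t) ^ p) s) y =
      p * (x * y) ^ (p - 2) *
        ((p - 1) * ((y * a) ^ 2 + (x * b) ^ 2) + 2 * p * (y * a) * (x * b)) := by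
  rw [deriv_deriv_mul_const_rpow p h, deriv_deriv_mul_rpow_mixed p h,
    deriv_deriv_const_mul_rpow p h]
  ring

end MulRpow

theorem Real.rpow_div_rpow_two_sub {u v : ℝ} (hu : 0 < u) (hv : 0 < v) (p : ℝ) :
    v ^ p / u ^ (2 - p) = (u * v) ^ (p - 2) * v ^ 2 := by
  rw [Real.mul_rpow hu.le hv.le, show p - 2 = -(2 - p) by ring, Real.rpow_neg hu.le,
    Real.rpow_neg hv.le, Real.rpow_sub hv, ← Real.rpow_natCast v 2]
  push_cast
  field_simp

theorem stmt9_general (u v a b : ℝ) (hu : 0 < u) (hv : 0 < v) :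
    (1/8) * (v ^ ((1:ℝ)/4) / u ^ ((7:ℝ)/4)) * a ^ 2 ≤
      -(a ^ 2 * deriv (fun u' => deriv (fun u'' => (u'' * v) ^ ((1:ℝ)/4)) u') u
        + 2 * a * b * deriv (fun v' => deriv (fun u' => (u' * v') ^ ((1:ℝ)/4)) u) v
        + b ^ 2 * deriv (fun v' => deriv (fun v'' => (u * v'') ^ ((1:ℝ)/4)) v') v) := by
  rw [hessian_form_mul_rpow _ a b (mul_pos hu hv).ne', show (7:ℝ) / 4 = 2 - 1 / 4 by norm_num,
    Real.rpow_div_rpow_two_sub hu hv]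
  have hP : 0 < (u * v) ^ ((1:ℝ) / 4 - 2) := by positivity
  nlinarith [mul_nonneg hP.le (sq_nonneg (v * a - u * b)), mul_nonneg hP.le (sq_nonneg (u * b))]

/-- the Bellman function `B(u,v) = (uv)^{1/4}` satisfies, on
`{uv ≥ 1/2, u,v > 0}`, the Hessian inequality
`−(a,b)·d²B(u,v)·(a,b)ᵗ ≥ (1/8)(v^{1/4}/u^{7/4}) a²`. -/
theorem stmt9 (u v a b : ℝ) (hu : 0 < u) (hv : 0 < v) (huv : 1/2 ≤ u * v) :
    (1/8) * (v ^ ((1:ℝ)/4) / u ^ ((7:ℝ)/4)) * a ^ 2 ≤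
      -(a ^ 2 * deriv (fun u' => deriv (fun u'' => (u'' * v) ^ ((1:ℝ)/4)) u') u
        + 2 * a * b * deriv (fun v' => deriv (fun u' => (u' * v') ^ ((1:ℝ)/4)) u) v
        + b ^ 2 * deriv (fun v' => deriv (fun v'' => (u * v'') ^ ((1:ℝ)/4)) v') v) :=
  stmt9_general u v a b hu hv
end

section
/- Let B(u,v) = (uv)^{1/4}. There is a constant C₁ > 0 such that for all points (u₊,v₊), (u₋,v₋) in D₀ = {(u,v): u,v>0, uv ≥ 1/2} whose midpoint (u,v) = ((u₊+u₋)/2, (v₊+v₋)/2) also lies in D₀, one has B(u,v) − (B(u₊,v₊)+B(u₋,v₋))/2 ≥ C₁ (v^{1/4}/u^{7/4}) (u₊ − u₋)². -/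
/-!
Cauchy–Schwarz gives `avg (u v)^{1/4} ≤ √(avg √u) · √(avg √v)`, and concavity of `√` bounds the
second factor by `v^{1/4}` at the midpoint. The defect is thus at least `v^{1/4}` times the
one-variable gap `u^{1/4} - √(avg √u)`, which is controlled by applying
`x - y ≤ 2 √x (√x - √y)` twice, once for each square root.
-/

open Real

lemma sub_le_two_mul_sqrt_mul_sqrt_sub {x y : ℝ} (hy : 0 ≤ y) :
    x - y ≤ 2 * √x * (√x - √y) := by
  rcases lt_or_ge x 0 with hx | hx
  · rw [sqrt_eq_zero_of_nonpos hx.le]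
    linarith
  · nlinarith [sq_sqrt hx, sq_sqrt hy, sq_nonneg (√x - √y)]

lemma sqrt_add_sqrt_div_two_le {a b : ℝ} (ha : 0 ≤ a) (hb : 0 ≤ b) :
    (√a + √b) / 2 ≤ √((a + b) / 2) := by
  rw [le_sqrt (by positivity) (by positivity)]
  nlinarith [sq_sqrt ha, sq_sqrt hb, sq_nonneg (√a - √b)]

lemma sqrt_mul_sqrt_add_sqrt_mul_sqrt_div_two_le {a b c d : ℝ}
    (ha : 0 ≤ a) (hb : 0 ≤ b) (hc : 0 ≤ c) (hd : 0 ≤ d) :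
    (√a * √c + √b * √d) / 2 ≤ √((a + b) / 2) * √((c + d) / 2) := by
  rw [← sqrt_mul (by positivity : 0 ≤ (a + b) / 2), le_sqrt (by positivity) (by positivity)]
  nlinarith [sq_sqrt ha, sq_sqrt hb, sq_sqrt hc, sq_sqrt hd, sq_nonneg (√a * √d - √b * √c)]

lemma sq_sub_le_sqrt_midpoint_gap {a b : ℝ} (ha : 0 ≤ a) (hb : 0 ≤ b) :
    (a - b) ^ 2 ≤ 32 * ((a + b) / 2) * √((a + b) / 2) * (√((a + b) / 2) - (√a + √b) / 2) := by
  set M := (a + b) / 2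
  set s := (√a + √b) / 2
  have hs : 0 ≤ s := by positivity
  have hgap : M - s ^ 2 ≤ 2 * √M * (√M - s) := by
    simpa only [sqrt_sq hs] using sub_le_two_mul_sqrt_mul_sqrt_sub (sq_nonneg s)
  have hfactor : (a - b) ^ 2 ≤ 16 * M * (M - s ^ 2) := by
    have hdiff : (a - b) ^ 2 = (√a - √b) ^ 2 * (√a + √b) ^ 2 := by
      rw [← mul_pow, mul_comm (√a - √b), ← sq_sub_sq, sq_sqrt ha, sq_sqrt hb]
    have hsum : (√a + √b) ^ 2 ≤ 4 * M := by
      simp only [M]; nlinarith [sq_sqrt ha, sq_sqrt hb, sq_nonneg (√a - √b)]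
    have hgap_eq : 16 * M * (M - s ^ 2) = (√a - √b) ^ 2 * (4 * M) := by
      simp only [M, s]; linear_combination (-4 * (a + b)) * (sq_sqrt ha + sq_sqrt hb)
    rw [hdiff, hgap_eq]
    gcongr
  calc (a - b) ^ 2 ≤ 16 * M * (M - s ^ 2) := hfactor
    _ ≤ 16 * M * (2 * √M * (√M - s)) := by gcongr
    _ = _ := by ring

lemma rpow_seven_div_four_eq {x : ℝ} (hx : 0 ≤ x) : x ^ ((7 : ℝ) / 4) = x * √x * √√x := by
  rw [sqrt_eq_rpow, sqrt_eq_rpow, ← rpow_mul hx, show (7 : ℝ) / 4 = 1 + 1 / 2 + 1 / 2 * (1 / 2) by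
    norm_num, rpow_add' hx (by norm_num), rpow_add' hx (by norm_num), rpow_one]

lemma rpow_one_div_four_eq {x : ℝ} (hx : 0 ≤ x) : x ^ ((1 : ℝ) / 4) = √√x := by
  rw [sqrt_eq_rpow, sqrt_eq_rpow, ← rpow_mul hx]
  norm_num

lemma sq_sub_div_le_rpow_one_div_four_sub {a b : ℝ} (ha : 0 < a) (hb : 0 < b) :
    (a - b) ^ 2 / (64 * ((a + b) / 2) ^ ((7 : ℝ) / 4)) ≤
      ((a + b) / 2) ^ ((1 : ℝ) / 4) - √((√a + √b) / 2) := by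
  have hM : 0 < (a + b) / 2 := by positivity
  rw [rpow_seven_div_four_eq hM.le, rpow_one_div_four_eq hM.le,
    div_le_iff₀ (by positivity)]
  calc (a - b) ^ 2
      ≤ 32 * ((a + b) / 2) * √((a + b) / 2) * (√((a + b) / 2) - (√a + √b) / 2) :=
        sq_sub_le_sqrt_midpoint_gap ha.le hb.le
    _ ≤ 32 * ((a + b) / 2) * √((a + b) / 2) *
        (2 * √√((a + b) / 2) * (√√((a + b) / 2) - √((√a + √b) / 2))) := by
        gcongr
        exact sub_le_two_mul_sqrt_mul_sqrt_sub (by positivity)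
    _ = _ := by ring

lemma rpow_one_div_four_mul_add_div_two_le {up vp um vm : ℝ}
    (hup : 0 ≤ up) (hvp : 0 ≤ vp) (hum : 0 ≤ um) (hvm : 0 ≤ vm) :
    ((up * vp) ^ ((1 : ℝ) / 4) + (um * vm) ^ ((1 : ℝ) / 4)) / 2 ≤
      √((√up + √um) / 2) * ((vp + vm) / 2) ^ ((1 : ℝ) / 4) := by
  rw [mul_rpow hup hvp, mul_rpow hum hvm, rpow_one_div_four_eq hup, rpow_one_div_four_eq hvp,
    rpow_one_div_four_eq hum, rpow_one_div_four_eq hvm, rpow_one_div_four_eq (by positivity)]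
  calc _ ≤ √((√up + √um) / 2) * √((√vp + √vm) / 2) :=
        sqrt_mul_sqrt_add_sqrt_mul_sqrt_div_two_le (sqrt_nonneg _) (sqrt_nonneg _)
          (sqrt_nonneg _) (sqrt_nonneg _)
    _ ≤ √((√up + √um) / 2) * √√((vp + vm) / 2) := by
        gcongr
        exact sqrt_add_sqrt_div_two_le hvp hvm

/-- midpoint concavity defect of `B(u,v) = (uv)^{1/4}` on
`D₀ = {(u,v) : u,v > 0, uv ≥ 1/2}`. -/
theorem stmt10 : ∃ C₁ > (0:ℝ), ∀ up vp um vm : ℝ,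
    0 < up → 0 < vp → 1/2 ≤ up * vp →
    0 < um → 0 < vm → 1/2 ≤ um * vm →
    1/2 ≤ ((up + um)/2) * ((vp + vm)/2) →
    C₁ * (((vp + vm)/2) ^ ((1:ℝ)/4) / ((up + um)/2) ^ ((7:ℝ)/4)) * (up - um) ^ 2 ≤
      (((up + um)/2) * ((vp + vm)/2)) ^ ((1:ℝ)/4) -
        ((up * vp) ^ ((1:ℝ)/4) + (um * vm) ^ ((1:ℝ)/4)) / 2 := by
  refine ⟨1 / 64, by norm_num, fun up vp um vm hup hvp _ hum hvm _ _ => ?_⟩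
  have hu := sq_sub_div_le_rpow_one_div_four_sub hup hum
  have hcs := rpow_one_div_four_mul_add_div_two_le hup.le hvp.le hum.le hvm.le
  calc _ = ((vp + vm) / 2) ^ ((1 : ℝ) / 4) *
        ((up - um) ^ 2 / (64 * ((up + um) / 2) ^ ((7 : ℝ) / 4))) := by ring
    _ ≤ ((vp + vm) / 2) ^ ((1 : ℝ) / 4) *
        (((up + um) / 2) ^ ((1 : ℝ) / 4) - √((√up + √um) / 2)) := by gcongr
    _ ≤ _ := by rw [mul_rpow (by positivity) (by positivity)]; linear_combination hcs
end

section
/- Let 0 < δ < 1 and define f(x) = x^{δ−1} χ_{(0,1)}(x) and b(x) = log|x|. Then for every x ∈ (0,1), |[b,H]f(x)| > x^{δ−1}/δ², where [b,H]f(x) = ∫₀¹ (log x − log y)/(x−y) · y^{δ−1} dy (the commutator of the Hilbert transform with b applied to f, up to a factor 1/π). -/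
/-!
The integrand is `slope log y x * y ^ (δ - 1)`, nonnegative because `log` is increasing, and
integrable on `(0, 1)` because the slope is at most `(2 / x) * (1 - log y)` there. So the
integral over `(0, 1)` dominates the one over `(0, x)`, where `x - y < x` makes the slope strictly
larger than `(log x - log y) / x`, and `∫₀ˣ (log x - log y) y ^ (δ - 1) dy = x ^ δ / δ ^ 2` by the
primitive `y ^ δ / δ * (log x - log y) + y ^ δ / δ ^ 2`.
-/

open MeasureTheory Set Real

lemma slope_log_nonneg {a b : ℝ} (ha : 0 < a) (hb : 0 < b) : 0 ≤ slope log a b :=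
  strictMonoOn_log.monotoneOn.slope_nonneg ha hb

lemma slope_log_le_inv_of_le {a b : ℝ} (ha : 0 < a) (hab : a ≤ b) : slope log a b ≤ a⁻¹ := by
  rcases hab.eq_or_lt with rfl | hab
  · simpa using ha.le
  have hb : 0 < b := ha.trans hab
  have hlog := log_le_sub_one_of_pos (div_pos hb ha)
  rw [log_div hb.ne' ha.ne'] at hlog
  rw [slope_def_field, div_le_iff₀ (sub_pos.2 hab)]
  calc log b - log a ≤ b / a - 1 := hlog
    _ = a⁻¹ * (b - a) := by field_simp

lemma slope_log_le_inv_min {a b : ℝ} (ha : 0 < a) (hb : 0 < b) : slope log a b ≤ (min a b)⁻¹ := by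
  rcases le_total a b with hab | hba
  · simpa [min_eq_left hab] using slope_log_le_inv_of_le ha hab
  · simpa [min_eq_right hba, slope_comm] using slope_log_le_inv_of_le hb hba

lemma slope_log_le_of_le_one {x y : ℝ} (hx : 0 < x) (hx1 : x ≤ 1) (hy : 0 < y) (hy1 : y ≤ 1) :
    slope log y x ≤ 2 / x * (1 - log y) := by
  rcases le_or_gt y (x / 2) with hyx | hxy
  · have hlogx : log x ≤ 0 := log_nonpos hx.le hx1
    rw [slope_def_field]
    have hnum : 0 ≤ log x - log y := by linarith [log_le_log hy (by linarith : y ≤ x)]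
    calc (log x - log y) / (x - y) ≤ (log x - log y) / (x / 2) := by gcongr; linarith
      _ = 2 / x * (log x - log y) := by field_simp
      _ ≤ 2 / x * (1 - log y) := by gcongr; linarith
  · calc slope log y x ≤ (min y x)⁻¹ := slope_log_le_inv_min hy hx
      _ ≤ (x / 2)⁻¹ := by gcongr; exact le_min hxy.le (by linarith)
      _ = 2 / x * 1 := by field_simp
      _ ≤ 2 / x * (1 - log y) := by gcongr; linarith [log_nonpos hy.le hy1]

section LogRpowPrimitive

variable {a δ : ℝ}

lemma hasDerivAt_rpow_mul_log_sub_log (hδ : 0 < δ) {y : ℝ} (hy : 0 < y) :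
    HasDerivAt (fun t => t ^ δ / δ * (log a - log t) + t ^ δ / δ ^ 2)
      ((log a - log y) * y ^ (δ - 1)) y := by
  have hpow := hasDerivAt_rpow_const (p := δ) (Or.inl hy.ne')
  refine (((hpow.div_const δ).mul ((hasDerivAt_log hy.ne').const_sub (log a))).add
    (hpow.div_const (δ ^ 2))).congr_deriv ?_
  rw [rpow_sub_one hy.ne']
  field_simp
  ring

lemma continuousOn_rpow_mul_log_sub_log (hδ : 0 < δ) :
    ContinuousOn (fun t => t ^ δ / δ * (log a - log t) + t ^ δ / δ ^ 2) (Ici 0) := by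
  have hpow : ContinuousOn (fun t : ℝ => t ^ δ) (Ici 0) :=
    continuousOn_id.rpow_const fun _ _ => Or.inr hδ.le
  have hrpow_log : ContinuousOn (fun t => log t * t ^ δ) (Ici 0) := by
    intro t ht
    rcases (mem_Ici.1 ht).eq_or_lt with rfl | ht
    · rw [← Ioi_insert, continuousWithinAt_insert_self, ContinuousWithinAt]
      simpa [zero_rpow hδ.ne'] using tendsto_log_mul_rpow_nhdsGT_zero hδ
    · exact ((continuousAt_log ht.ne').mul
        (continuousAt_rpow_const t δ (Or.inl ht.ne'))).continuousWithinAt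
  have hsum : ContinuousOn (fun t => log a * t ^ δ / δ - log t * t ^ δ / δ + t ^ δ / δ ^ 2)
      (Ici 0) :=
    (((continuousOn_const.mul hpow).div_const δ).sub (hrpow_log.div_const δ)).add
      (hpow.div_const (δ ^ 2))
  exact hsum.congr fun t _ => by ring

lemma integrableOn_log_sub_log_mul_rpow (hδ : 0 < δ) :
    IntegrableOn (fun y => (log a - log y) * y ^ (δ - 1)) (Ioc 0 a) :=
  intervalIntegral.integrableOn_deriv_of_nonneg
    ((continuousOn_rpow_mul_log_sub_log hδ).mono Icc_subset_Ici_self)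
    (fun _ hy => hasDerivAt_rpow_mul_log_sub_log hδ hy.1)
    fun _ hy => mul_nonneg (sub_nonneg.2 (log_le_log hy.1 hy.2.le)) (rpow_nonneg hy.1.le _)

lemma integral_log_sub_log_mul_rpow (hδ : 0 < δ) (ha : 0 < a) :
    ∫ y in 0..a, (log a - log y) * y ^ (δ - 1) = a ^ δ / δ ^ 2 := by
  rw [intervalIntegral.integral_eq_sub_of_hasDerivAt_of_le ha.le
    ((continuousOn_rpow_mul_log_sub_log hδ).mono Icc_subset_Ici_self)
    (fun _ hy => hasDerivAt_rpow_mul_log_sub_log hδ hy.1)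
    ((intervalIntegrable_iff_integrableOn_Ioc_of_le ha.le).2
      (integrableOn_log_sub_log_mul_rpow hδ))]
  simp [zero_rpow hδ.ne']

end LogRpowPrimitive

lemma integrableOn_slope_log_mul_rpow {δ x : ℝ} (hδ : 0 < δ) (hx : 0 < x) (hx1 : x ≤ 1) :
    IntegrableOn (fun y => slope log y x * y ^ (δ - 1)) (Ioo 0 1) := by
  have hdom : IntegrableOn (fun y => 2 / x * (y ^ (δ - 1) + (log 1 - log y) * y ^ (δ - 1)))
      (Ioo 0 1) :=
    (((intervalIntegral.integrableOn_Ioo_rpow_iff zero_lt_one).2 (by linarith)).add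
      ((integrableOn_log_sub_log_mul_rpow hδ).mono_set Ioo_subset_Ioc_self)).const_mul _
  refine hdom.mono' ?_ (ae_restrict_of_forall_mem measurableSet_Ioo fun y hy => ?_)
  · simp_rw [slope_def_field]
    exact Measurable.aestronglyMeasurable (by fun_prop)
  · have hpow : 0 ≤ y ^ (δ - 1) := rpow_nonneg hy.1.le _
    rw [norm_of_nonneg (mul_nonneg (slope_log_nonneg hy.1 hx) hpow), log_one, zero_sub,
      ← one_add_mul, ← sub_eq_add_neg]
    exact (mul_le_mul_of_nonneg_right (slope_log_le_of_le_one hx hx1 hy.1 hy.2.le) hpow).trans_eq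
      (mul_assoc _ _ _)

lemma inv_mul_log_sub_log_lt_slope_log {x y : ℝ} (hy : 0 < y) (hyx : y < x) :
    x⁻¹ * (log x - log y) < slope log y x := by
  rw [slope_def_field, inv_mul_eq_div]
  exact div_lt_div_of_pos_left (sub_pos.2 (log_lt_log hy hyx)) (sub_pos.2 hyx) (by linarith)

lemma rpow_sub_one_div_sq_lt_integral_slope_log_mul_rpow {δ x : ℝ} (hδ : 0 < δ) (hx : 0 < x)
    (hx1 : x ≤ 1) : x ^ (δ - 1) / δ ^ 2 < ∫ y in Ioo 0 x, slope log y x * y ^ (δ - 1) := by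
  have hint : IntegrableOn (fun y => slope log y x * y ^ (δ - 1)) (Ioc 0 x) :=
    (integrableOn_Ioc_iff_integrableOn_Ioo).2
      ((integrableOn_slope_log_mul_rpow hδ hx hx1).mono_set (Ioo_subset_Ioo_right hx1))
  have hlt : ∀ y ∈ Ioo 0 x,
      x⁻¹ * ((log x - log y) * y ^ (δ - 1)) < slope log y x * y ^ (δ - 1) := fun y hy => by
    rw [← mul_assoc]
    exact mul_lt_mul_of_pos_right (inv_mul_log_sub_log_lt_slope_log hy.1 hy.2)
      (rpow_pos_of_pos hy.1 _)
  have hle : ∀ y ∈ Ioc 0 x,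
      x⁻¹ * ((log x - log y) * y ^ (δ - 1)) ≤ slope log y x * y ^ (δ - 1) := fun y hy => by
    rcases hy.2.eq_or_lt with rfl | hyx
    · simp
    · exact (hlt y ⟨hy.1, hyx⟩).le
  calc x ^ (δ - 1) / δ ^ 2 = ∫ y in 0..x, x⁻¹ * ((log x - log y) * y ^ (δ - 1)) := by
        rw [intervalIntegral.integral_const_mul, integral_log_sub_log_mul_rpow hδ hx,
          rpow_sub_one hx.ne']
        field_simp
    _ < ∫ y in 0..x, slope log y x * y ^ (δ - 1) := by
      refine intervalIntegral.integral_lt_integral_of_ae_le_of_measure_setOfPred_lt_ne_zero hx.le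
        (((intervalIntegrable_iff_integrableOn_Ioc_of_le hx.le).2
          (integrableOn_log_sub_log_mul_rpow hδ)).const_mul _)
        ((intervalIntegrable_iff_integrableOn_Ioc_of_le hx.le).2 hint)
        (ae_restrict_of_forall_mem measurableSet_Ioc hle) fun hnull => ?_
      have := measure_mono_null hlt hnull
      rw [Measure.restrict_apply measurableSet_Ioo, inter_eq_left.2 Ioo_subset_Ioc_self,
        Real.volume_Ioo] at this
      simp only [sub_zero, ENNReal.ofReal_eq_zero] at this
      exact this.not_gt hx
    _ = ∫ y in Ioo 0 x, slope log y x * y ^ (δ - 1) := by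
      rw [intervalIntegral.integral_of_le hx.le, integral_Ioc_eq_integral_Ioo]

theorem stmt17_general (δ : ℝ) (hδ : 0 < δ) (x : ℝ) (hx : x ∈ Set.Ioo (0:ℝ) 1) :
    x ^ (δ - 1) / δ ^ 2 <
      |∫ y in Set.Ioo (0:ℝ) 1, (Real.log x - Real.log y) / (x - y) * y ^ (δ - 1)| := by
  obtain ⟨hx0, hx1⟩ := hx
  simp_rw [← slope_def_field log]
  calc x ^ (δ - 1) / δ ^ 2 < ∫ y in Ioo 0 x, slope log y x * y ^ (δ - 1) :=
        rpow_sub_one_div_sq_lt_integral_slope_log_mul_rpow hδ hx0 hx1.le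
    _ ≤ ∫ y in Ioo 0 1, slope log y x * y ^ (δ - 1) :=
        setIntegral_mono_set (integrableOn_slope_log_mul_rpow hδ hx0 hx1.le)
          (ae_restrict_of_forall_mem measurableSet_Ioo fun y hy =>
            mul_nonneg (slope_log_nonneg hy.1 hx0) (rpow_nonneg hy.1.le _))
          (Ioo_subset_Ioo_right hx1.le).eventuallyLE
    _ ≤ _ := le_abs_self _

/-- for `f(x) = x^{δ−1}χ_{(0,1)}`, `b = log|x|`, the commutator of the
Hilbert transform satisfies `|[b,H]f(x)| > x^{δ−1}/δ²` on `(0,1)`. -/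
theorem stmt17 (δ : ℝ) (hδ : 0 < δ) (hδ1 : δ < 1) (x : ℝ) (hx : x ∈ Set.Ioo (0:ℝ) 1) :
    x ^ (δ - 1) / δ ^ 2 <
      |∫ y in Set.Ioo (0:ℝ) 1, (Real.log x - Real.log y) / (x - y) * y ^ (δ - 1)| :=
  stmt17_general δ hδ x hx
end
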